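/- arXiv:math/0205172 — 4 statements merged into one kernel-verified Lean document; each statement's English description precedes it below -/
import Mathlib

section
/- Let (Y, d) be a metric space, let g : Y → ℝ^N be a 1-Lipschitz map into Euclidean space, and let λ, μ : Y → ℝ be finitely supported functions with nonnegative values. Suppose D ≥ 0 is such that |∑_{y} (λ(y) − μ(y)) f(y)| ≤ D for every 1-Lipschitz function f : Y → ℝ. Then ‖∑_{y} (λ(y) − μ(y)) • g(y)‖ ≤ N · D, where the norm is the Euclidean norm on ℝ^N and the sums range over the (finite) supports of λ and μ. -/
/-!
The `k`-th coordinate of `∑ (λ y - μ y) • g y` is the pairing of `λ - μ` with the coordinate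
function `g_k`, which is again `1`-Lipschitz, so it is at most `D` in absolute value; the
Euclidean norm is bounded by the sum of the absolute values of the coordinates.
-/

open Function

theorem LipschitzWith.piLp_apply {α ι : Type*} [PseudoEMetricSpace α] [Fintype ι]
    {p : ENNReal} [Fact (1 ≤ p)] {β : ι → Type*} [∀ i, PseudoEMetricSpace (β i)]
    {K : NNReal} {g : α → PiLp p β} (hg : LipschitzWith K g) (i : ι) :
    LipschitzWith K (fun y => g y i) :=
  fun x y => (PiLp.edist_apply_le _ _ i).trans (hg x y)

theorem PiLp.norm_le_sum_norm {ι : Type*} [Fintype ι] {p : ENNReal} [Fact (1 ≤ p)]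
    {β : ι → Type*} [∀ i, SeminormedAddCommGroup (β i)] (x : PiLp p β) :
    ‖x‖ ≤ ∑ i, ‖x i‖ := by
  classical
  have hx : x = ∑ i, PiLp.single p i (x i) := by ext j; simp
  calc ‖x‖ = ‖∑ i, PiLp.single p i (x i)‖ := by rw [← hx]
    _ ≤ ∑ i, ‖PiLp.single p i (x i)‖ := norm_sum_le _ _
    _ = ∑ i, ‖x i‖ := by simp only [PiLp.norm_single]

theorem PiLp.finsum_apply {α ι : Type*} {p : ENNReal} {β : ι → Type*}
    [∀ i, SeminormedAddCommGroup (β i)] {f : α → PiLp p β} (hf : (support f).Finite) (i : ι) :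
    (∑ᶠ y, f y) i = ∑ᶠ y, f y i :=
  map_finsum (PiLp.projₗ p (𝕜 := ℤ) β i) hf

theorem norm_finsum_smul_le_card_mul_of_lipschitz_pairing {Y ι : Type*} [PseudoMetricSpace Y]
    [Fintype ι] {p : ENNReal} [Fact (1 ≤ p)] (g : Y → PiLp p (fun _ : ι => ℝ))
    (hg : LipschitzWith 1 g) (c : Y → ℝ) (hc : (support c).Finite) (D : ℝ)
    (hpair : ∀ f : Y → ℝ, LipschitzWith 1 f → |∑ᶠ y, c y * f y| ≤ D) :
    ‖∑ᶠ y, c y • g y‖ ≤ Fintype.card ι * D := by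
  have hfin : (support fun y => c y • g y).Finite := hc.subset (support_smul_subset_left c g)
  calc ‖∑ᶠ y, c y • g y‖ ≤ ∑ k, ‖(∑ᶠ y, c y • g y) k‖ := PiLp.norm_le_sum_norm _
    _ = ∑ k, |∑ᶠ y, c y * g y k| := by
      simp only [PiLp.finsum_apply hfin, PiLp.smul_apply, smul_eq_mul, Real.norm_eq_abs]
    _ ≤ ∑ _k : ι, D := Finset.sum_le_sum fun k _ => hpair _ (hg.piLp_apply k)
    _ = Fintype.card ι * D := by simp

theorem norm_finsum_smul_le_of_lipschitz_pairing_general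
    {Y : Type*} [MetricSpace Y] {N : ℕ}
    (g : Y → EuclideanSpace ℝ (Fin N)) (hg : LipschitzWith 1 g)
    (lam mu : Y → ℝ)
    (hlam : (Function.support lam).Finite) (hmu : (Function.support mu).Finite)
    (D : ℝ)
    (hpair : ∀ f : Y → ℝ, LipschitzWith 1 f → |∑ᶠ y, (lam y - mu y) * f y| ≤ D) :
    ‖∑ᶠ y, (lam y - mu y) • g y‖ ≤ (N : ℝ) * D := by
  have hc : (support (lam - mu)).Finite := (hlam.union hmu).subset (support_sub lam mu)
  simpa using norm_finsum_smul_le_card_mul_of_lipschitz_pairing g hg (lam - mu) hc D hpair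

/-- The Kantorovich–Rubinstein estimate from the proof of Proposition 3: if
`g : Y → ℝ^N` is `1`-Lipschitz and the signed measure `λ − μ` (with `λ, μ`
finitely supported and nonnegative) pairs with every `1`-Lipschitz function
`f : Y → ℝ` to give a number of absolute value at most `D`, then
`‖∑ (λ(y) − μ(y)) • g(y)‖ ≤ N · D`. -/
theorem norm_finsum_smul_le_of_lipschitz_pairing
    {Y : Type*} [MetricSpace Y] {N : ℕ}
    (g : Y → EuclideanSpace ℝ (Fin N)) (hg : LipschitzWith 1 g)
    (lam mu : Y → ℝ)
    (hlam : (Function.support lam).Finite) (hmu : (Function.support mu).Finite)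
    (hlam0 : ∀ y, 0 ≤ lam y) (hmu0 : ∀ y, 0 ≤ mu y)
    (D : ℝ) (hD : 0 ≤ D)
    (hpair : ∀ f : Y → ℝ, LipschitzWith 1 f → |∑ᶠ y, (lam y - mu y) * f y| ≤ D) :
    ‖∑ᶠ y, (lam y - mu y) • g y‖ ≤ (N : ℝ) * D :=
  norm_finsum_smul_le_of_lipschitz_pairing_general g hg lam mu hlam hmu D hpair
end

section
/- Let (X_n) be an expander of degree d and conductance c > 0. Then there is a constant c₀ ≥ 0 such that for every n and every 1-Lipschitz map f : X_n → ℓ² (with respect to the graph metric) satisfying ∑_{x∈X_n} f(x) = 0, one has (1/|X_n|) ∑_{x∈X_n} ‖f(x)‖² ≤ c₀/2. -/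
open Classical in
/-- The degree of a vertex `v` in a finite simple graph. -/
noncomputable def gdeg {V : Type*} [Fintype V] (G : SimpleGraph V) (v : V) : ℕ :=
  (Finset.univ.filter fun w => G.Adj v w).card

open Classical in
/-- The boundary `∂A = {x : dist(x, A) = 1}` of a set of vertices `A`: the set of
vertices not in `A` that are adjacent to a vertex of `A`. -/
noncomputable def graphBoundary {V : Type*} [Fintype V] (G : SimpleGraph V)
    (A : Finset V) : Finset V :=
  Finset.univ.filter fun x => x ∉ A ∧ ∃ a ∈ A, G.Adj x a

/-- An expander of degree `d` and conductance `c`: a sequence of finite connected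
`d`-regular graphs whose cardinalities tend to infinity, such that every set `A`
of at most half the vertices satisfies `|∂A| ≥ c·|A|`. -/
structure Expander (d : ℕ) (c : ℝ) where
  V : ℕ → Type
  [fintype : ∀ n, Fintype (V n)]
  G : ∀ n, SimpleGraph (V n)
  connected : ∀ n, (G n).Connected
  regular : ∀ (n : ℕ) (v : V n), gdeg (G n) v = d
  card_tendsto : Filter.Tendsto (fun n => Fintype.card (V n)) Filter.atTop Filter.atTop
  expansion : ∀ (n : ℕ) (A : Finset (V n)),
    (A.card : ℝ) ≤ (Fintype.card (V n) : ℝ) / 2 →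
    c * A.card ≤ ((graphBoundary (G n) A).card : ℝ)

attribute [instance] Expander.fintype

open Classical in
/-- The finset of unordered pairs of distinct vertices. -/
noncomputable def offDiagPairs (V : Type*) [Fintype V] : Finset (Sym2 V) :=
  Finset.univ.filter fun e => ¬ e.IsDiag

/-- The squared distance `‖f x − f y‖²` as a function of the unordered pair `{x, y}`. -/
noncomputable def sqDistFun {V H : Type*} [NormedAddCommGroup H] (f : V → H) :
    Sym2 V → ℝ :=
  Sym2.lift ⟨fun x y => ‖f x - f y‖ ^ 2, fun x y => by show ‖f x - f y‖ ^ 2 = ‖f y - f x‖ ^ 2; rw [norm_sub_rev]⟩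

/-- `∑_{{x,y} ∈ P} ‖f x − f y‖²`, summed over unordered pairs of distinct vertices. -/
noncomputable def pairSqSum {V : Type*} [Fintype V] {H : Type*} [NormedAddCommGroup H]
    (f : V → H) : ℝ :=
  ∑ e ∈ offDiagPairs V, sqDistFun f e

open Classical in
/-- `∑_{{x,y} ∈ E} ‖f x − f y‖²`, summed over the edges of `G`. -/
noncomputable def edgeSqSum {V : Type*} [Fintype V] (G : SimpleGraph V)
    {H : Type*} [NormedAddCommGroup H] (f : V → H) : ℝ :=
  ∑ e ∈ G.edgeFinset, sqDistFun f e

open Classical in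
/-- The number of edges of a finite simple graph. -/
noncomputable def edgeCount {V : Type*} [Fintype V] (G : SimpleGraph V) : ℕ :=
  G.edgeFinset.card

/-!
The heart of the proof is a Cheeger-type Poincaré inequality: if `G` has vertex expansion `c`
and maximal degree `Δ`, then `c² ∑ g² ≤ 8 Δ ∑_{x ~ y} (g x - g y)²` for every real `g` of mean
zero, the sum running over ordered pairs of adjacent vertices. For a nonnegative `h` supported on at most half of the vertices one first gets the `L¹`
bound `c ∑ h ≤ ∑_{x ~ y} |h x - h y|` by slicing `h` into multiples of indicators of its
superlevel sets, each of which has boundary of size at least `c` times its size. Applied to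
`h = g²` together with Cauchy–Schwarz and `(a + b)² ≤ 2 (a² + b²)`, this gives the quadratic
bound for such `g`; a mean-zero `g` is split at a median into two such functions. The inequality
passes to `ℓ²`-valued maps coordinatewise, and for a `1`-Lipschitz map each of the `≤ Δ |X|`
terms `‖f x - f y‖²` is at most `1`.
-/

open Finset

theorem exists_median {α V : Type*} [LinearOrder α] [Fintype V] [Nonempty V] (g : V → α) :
    ∃ m, 2 * #{v | m < g v} ≤ Fintype.card V ∧ 2 * #{v | g v < m} ≤ Fintype.card V := by
  set N := Fintype.card V
  let e₀ := (Fintype.equivFin V).symm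
  let e := (Tuple.sort (g ∘ e₀)).trans e₀
  have he : Monotone (g ∘ e) := Tuple.monotone_sort (g ∘ e₀)
  have hN : 0 < N := Fintype.card_pos
  let p : Fin N := ⟨N / 2, by omega⟩
  refine ⟨g (e p), ?_, ?_⟩
  · calc 2 * #{v | g (e p) < g v} ≤ 2 * #(Ioi p) := by
          gcongr
          refine card_le_card_of_injOn e.symm (fun v hv => ?_) e.symm.injective.injOn
          simpa using he.reflect_lt (a := p) (b := e.symm v) (by simpa using hv)
      _ = 2 * (N - 1 - N / 2) := by rw [Fin.card_Ioi]
      _ ≤ N := by omega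
  · calc 2 * #{v | g v < g (e p)} ≤ 2 * #(Iio p) := by
          gcongr
          refine card_le_card_of_injOn e.symm (fun v hv => ?_) e.symm.injective.injOn
          simpa using he.reflect_lt (a := e.symm v) (b := p) (by simpa using hv)
      _ = 2 * (N / 2) := by rw [Fin.card_Iio]
      _ ≤ N := by omega

theorem sum_sq_le_sum_sub_sq_of_sum_eq_zero {V : Type*} [Fintype V] (g : V → ℝ)
    (hg : ∑ v, g v = 0) (m : ℝ) : ∑ v, g v ^ 2 ≤ ∑ v, (g v - m) ^ 2 := by
  have : ∑ v, (g v - m) ^ 2 = ∑ v, g v ^ 2 + Fintype.card V * m ^ 2 := by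
    simp only [sub_sq, sum_add_distrib, sum_sub_distrib, ← sum_mul, ← mul_sum, hg, sum_const,
      card_univ, nsmul_eq_mul]
    ring
  rw [this]
  nlinarith [sq_nonneg m, (Fintype.card V).cast_nonneg (α := ℝ)]

theorem max_sub_zero_sq_add_max_sub_zero_sq (a m : ℝ) :
    max (a - m) 0 ^ 2 + max (m - a) 0 ^ 2 = (a - m) ^ 2 := by
  rcases le_total a m with h | h
  · rw [max_eq_right (by linarith), max_eq_left (by linarith)]; ring
  · rw [max_eq_left (by linarith), max_eq_right (by linarith)]; ring

theorem lp.hasSum_sq {ι : Type*} (v : lp (fun _ : ι => ℝ) 2) :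
    HasSum (fun i => v i ^ 2) (‖v‖ ^ 2) := by
  simpa [Real.norm_eq_abs, sq_abs] using lp.hasSum_norm (p := 2) (by norm_num) v

namespace SimpleGraph

variable {V : Type*} [Fintype V] (G : SimpleGraph V)

def IsVertexExpander (c : ℝ) : Prop :=
  ∀ A : Finset V, (#A : ℝ) ≤ Fintype.card V / 2 → c * #A ≤ #(graphBoundary G A)

variable [DecidableRel G.Adj]

theorem degree_eq_gdeg (v : V) : G.degree v = gdeg G v := by
  rw [← card_neighborFinset_eq_degree, neighborFinset_eq_filter, gdeg]
  congr

theorem sum_sum_neighborFinset_comm (F : V → V → ℝ) :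
    ∑ x, ∑ y ∈ G.neighborFinset x, F x y = ∑ x, ∑ y ∈ G.neighborFinset x, F y x := by
  simp only [neighborFinset_eq_filter, sum_filter]
  rw [sum_comm]
  simp only [adj_comm]

theorem sum_sum_neighborFinset_le_maxDegree_mul (F : V → ℝ) (hF : ∀ x, 0 ≤ F x) :
    ∑ x, ∑ _y ∈ G.neighborFinset x, F x ≤ G.maxDegree * ∑ x, F x := by
  rw [mul_sum]
  gcongr with x
  rw [sum_const, card_neighborFinset_eq_degree, nsmul_eq_mul]
  gcongr
  · exact hF x
  · exact_mod_cast G.degree_le_maxDegree x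

theorem sum_sum_neighborFinset_norm_sub_sq_le {E : Type*} [SeminormedAddCommGroup E] (f : V → E)
    (hf : ∀ x y, G.Adj x y → ‖f x - f y‖ ≤ 1) :
    ∑ x, ∑ y ∈ G.neighborFinset x, ‖f x - f y‖ ^ 2 ≤ G.maxDegree * Fintype.card V :=
  calc ∑ x, ∑ y ∈ G.neighborFinset x, ‖f x - f y‖ ^ 2
      ≤ ∑ x, ∑ _y ∈ G.neighborFinset x, (1 : ℝ) :=
        sum_le_sum fun x _ => sum_le_sum fun y hy =>
          pow_le_one₀ (norm_nonneg _) (hf x y ((G.mem_neighborFinset x y).1 hy))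
    _ ≤ G.maxDegree * ∑ _x : V, (1 : ℝ) :=
        G.sum_sum_neighborFinset_le_maxDegree_mul _ fun _ => zero_le_one
    _ = G.maxDegree * Fintype.card V := by simp

theorem card_graphBoundary_le_sum_abs_sub_indicator (s : Finset V) :
    (#(graphBoundary G s) : ℝ) ≤ ∑ x, ∑ y ∈ G.neighborFinset x,
      |(s : Set V).indicator 1 x - (s : Set V).indicator (1 : V → ℝ) y| := by
  set χ : V → ℝ := (s : Set V).indicator 1
  calc (#(graphBoundary G s) : ℝ) = ∑ _x ∈ graphBoundary G s, 1 := by simp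
    _ ≤ ∑ x ∈ graphBoundary G s, ∑ y ∈ G.neighborFinset x, |χ x - χ y| := by
        gcongr with x hx
        obtain ⟨hxs, a, has, hxa⟩ : x ∉ s ∧ ∃ a ∈ s, G.Adj x a := by
          simpa [graphBoundary] using hx
        calc (1 : ℝ) = |χ x - χ a| := by simp [χ, hxs, has]
          _ ≤ _ := single_le_sum (f := fun y => |χ x - χ y|) (fun _ _ => abs_nonneg _)
                ((G.mem_neighborFinset x a).2 hxa)
    _ ≤ _ := sum_le_sum_of_subset_of_nonneg (subset_univ _)
          fun _ _ _ => sum_nonneg fun _ _ => abs_nonneg _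

theorem mul_sum_le_sum_abs_sub_of_card_support_le {c : ℝ} (hG : G.IsVertexExpander c)
    (h : V → ℝ) (h0 : ∀ v, 0 ≤ h v)
    (hsupp : (#{v | h v ≠ 0} : ℝ) ≤ Fintype.card V / 2) :
    c * ∑ v, h v ≤ ∑ x, ∑ y ∈ G.neighborFinset x, |h x - h y| := by
  induction hn : #{v | h v ≠ 0} using Nat.strong_induction_on generalizing h with
  | _ n ih =>
  set S : Finset V := {v | h v ≠ 0} with hS
  rcases S.eq_empty_or_nonempty with hSe | hSne
  · have : h = 0 := funext fun v => by simpa [hS] using filter_eq_empty_iff.1 hSe (mem_univ v)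
    simp [this]
  -- Peel off the lowest layer: `h = h v₀ • χ + h'`, `h v₀` being the least positive value.
  obtain ⟨v₀, hv₀, hmin⟩ := S.exists_min_image h hSne
  set χ : V → ℝ := (S : Set V).indicator 1
  set h' : V → ℝ := fun v => h v - h v₀ * χ v
  have hχ : ∀ v ∈ S, χ v = 1 := fun v hv => Set.indicator_of_mem (mem_coe.2 hv) _
  have hχ' : ∀ v ∉ S, χ v = 0 := fun v hv => Set.indicator_of_notMem (mt mem_coe.1 hv) _
  have hzero : ∀ v ∉ S, h v = 0 := fun v hv => by simpa [hS] using hv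
  have h'0 : ∀ v, 0 ≤ h' v := fun v => by
    by_cases hv : v ∈ S
    · simp [h', hχ v hv, hmin v hv]
    · simp [h', hχ' v hv, hzero v hv]
  have hsub : ({v | h' v ≠ 0} : Finset V) ⊂ S := by
    refine (ssubset_iff_of_subset fun v hv => ?_).2 ⟨v₀, hv₀, by simp [h', hχ v₀ hv₀]⟩
    by_contra hvS
    simp [h', hχ' v hvS, hzero v hvS] at hv
  have hsplit : ∀ x y, |h x - h y| = |h' x - h' y| + h v₀ * |χ x - χ y| := fun x y => by
    by_cases hx : x ∈ S <;> by_cases hy : y ∈ S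
    all_goals simp only [h', hχ, hχ', hzero, hx, hy, not_false_eq_true]
    · simp
    · simp [abs_of_nonneg (h0 x), abs_of_nonneg (sub_nonneg.2 (hmin x hx))]
    · simp [abs_of_nonneg (h0 y), abs_of_nonpos (sub_nonpos.2 (hmin y hy))]
    · simp
  have IH := ih _ (hn ▸ card_lt_card hsub) h' h'0
    (le_trans (by exact_mod_cast card_le_card hsub.subset) hsupp) rfl
  have hcut : c * #S ≤ ∑ x, ∑ y ∈ G.neighborFinset x, |χ x - χ y| :=
    (hG S hsupp).trans (G.card_graphBoundary_le_sum_abs_sub_indicator S)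
  calc c * ∑ v, h v = c * ∑ v, h' v + h v₀ * (c * #S) := by
        have hχsum : ∑ v, χ v = #S := by
          rw [sum_indicator_subset _ (subset_univ S)]
          simp
        simp only [h', sum_sub_distrib, ← mul_sum, hχsum]
        ring
    _ ≤ ∑ x, ∑ y ∈ G.neighborFinset x, |h' x - h' y|
          + h v₀ * ∑ x, ∑ y ∈ G.neighborFinset x, |χ x - χ y| := by
        gcongr
        exact h0 v₀
    _ = ∑ x, ∑ y ∈ G.neighborFinset x, |h x - h y| := by
        simp only [hsplit, sum_add_distrib, mul_sum]

theorem sq_mul_sum_sq_le_of_card_support_le {c : ℝ} (hc : 0 ≤ c) (hG : G.IsVertexExpander c)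
    (g : V → ℝ) (hg : ∀ v, 0 ≤ g v)
    (hsupp : (#{v | g v ≠ 0} : ℝ) ≤ Fintype.card V / 2) :
    c ^ 2 * ∑ v, g v ^ 2 ≤
      4 * G.maxDegree * ∑ x, ∑ y ∈ G.neighborFinset x, (g x - g y) ^ 2 := by
  set S := ∑ v, g v ^ 2
  set Q := ∑ x, ∑ y ∈ G.neighborFinset x, (g x - g y) ^ 2
  have hS : 0 ≤ S := sum_nonneg fun v _ => sq_nonneg _
  have hL1 : c * S ≤ ∑ x, ∑ y ∈ G.neighborFinset x, |g x - g y| * (g x + g y) := by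
    have hsupp' : (#{v | g v ^ 2 ≠ 0} : ℝ) ≤ Fintype.card V / 2 := by simpa using hsupp
    refine (G.mul_sum_le_sum_abs_sub_of_card_support_le hG _ (fun v => sq_nonneg _) hsupp').trans
      (le_of_eq ?_)
    refine sum_congr rfl fun x _ => sum_congr rfl fun y _ => ?_
    rw [sq_sub_sq, abs_mul, abs_of_nonneg (add_nonneg (hg x) (hg y)), mul_comm]
  have hP : ∑ x, ∑ y ∈ G.neighborFinset x, (g x + g y) ^ 2 ≤ 4 * G.maxDegree * S :=
    calc ∑ x, ∑ y ∈ G.neighborFinset x, (g x + g y) ^ 2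
        ≤ ∑ x, ∑ y ∈ G.neighborFinset x, 2 * (g x ^ 2 + g y ^ 2) := by
          gcongr; nlinarith [sq_nonneg (g x - g y)]
      _ = 4 * ∑ x, ∑ _y ∈ G.neighborFinset x, g x ^ 2 := by
          simp only [mul_add, sum_add_distrib, ← mul_sum]
          rw [G.sum_sum_neighborFinset_comm fun x y => g y ^ 2]
          ring
      _ ≤ 4 * G.maxDegree * S := by
          rw [mul_assoc]
          gcongr
          exact G.sum_sum_neighborFinset_le_maxDegree_mul _ fun v => sq_nonneg _
  have hCS : (c * S) ^ 2 ≤ Q * (4 * G.maxDegree * S) :=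
    calc (c * S) ^ 2 ≤ (∑ x, ∑ y ∈ G.neighborFinset x, |g x - g y| * (g x + g y)) ^ 2 :=
          pow_le_pow_left₀ (mul_nonneg hc hS) hL1 2
      _ ≤ Q * ∑ x, ∑ y ∈ G.neighborFinset x, (g x + g y) ^ 2 := by
          simp only [Q, sum_sigma']
          simpa only [sq_abs] using
            sum_mul_sq_le_sq_mul_sq _ (fun p : Σ _ : V, V => |g p.1 - g p.2|) fun p => g p.1 + g p.2
      _ ≤ Q * (4 * G.maxDegree * S) := by gcongr
  rcases hS.eq_or_lt with hS0 | hSpos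
  · rw [← hS0, mul_zero]; positivity
  · nlinarith

theorem sq_mul_sum_sq_le_of_sum_eq_zero {c : ℝ} (hc : 0 ≤ c) (hG : G.IsVertexExpander c)
    (g : V → ℝ) (hg : ∑ v, g v = 0) :
    c ^ 2 * ∑ v, g v ^ 2 ≤
      8 * G.maxDegree * ∑ x, ∑ y ∈ G.neighborFinset x, (g x - g y) ^ 2 := by
  rcases isEmpty_or_nonempty V with hV | hV
  · simp
  set Q := ∑ x, ∑ y ∈ G.neighborFinset x, (g x - g y) ^ 2
  obtain ⟨m, hm_gt, hm_lt⟩ := exists_median g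
  have half : ∀ φ : V → ℝ, (∀ v, 0 ≤ φ v) → (∀ x y, |φ x - φ y| ≤ |g x - g y|) →
      (#{v | φ v ≠ 0} : ℝ) ≤ Fintype.card V / 2 →
      c ^ 2 * ∑ v, φ v ^ 2 ≤ 4 * G.maxDegree * Q := by
    intro φ hφ hφg hsupp
    refine (G.sq_mul_sum_sq_le_of_card_support_le hc hG φ hφ hsupp).trans ?_
    gcongr 4 * _ * ?_
    exact sum_le_sum fun x _ => sum_le_sum fun y _ =>
      sq_le_sq.2 (by simpa only [abs_abs] using hφg x y)
  have hcard : ∀ s t : Finset V, s ⊆ t → 2 * #t ≤ Fintype.card V →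
      (#s : ℝ) ≤ Fintype.card V / 2 := fun s t hst ht => by
    rw [le_div_iff₀ two_pos]
    exact_mod_cast (by have := card_le_card hst; omega)
  have hpos := half (fun v => max (g v - m) 0) (fun v => le_max_right _ _)
    (fun x y => by simpa using abs_max_sub_max_le_abs (g x - m) (g y - m) 0)
    (hcard _ _ (fun v => by simp) hm_gt)
  have hneg := half (fun v => max (m - g v) 0) (fun v => le_max_right _ _)
    (fun x y => by simpa [abs_sub_comm] using abs_max_sub_max_le_abs (m - g x) (m - g y) 0)
    (hcard _ _ (fun v => by simp) hm_lt)
  calc c ^ 2 * ∑ v, g v ^ 2 ≤ c ^ 2 * ∑ v, (g v - m) ^ 2 :=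
        mul_le_mul_of_nonneg_left (sum_sq_le_sum_sub_sq_of_sum_eq_zero g hg m) (sq_nonneg c)
    _ = c ^ 2 * ∑ v, max (g v - m) 0 ^ 2 + c ^ 2 * ∑ v, max (m - g v) 0 ^ 2 := by
        simp only [← max_sub_zero_sq_add_max_sub_zero_sq, sum_add_distrib, mul_add]
    _ ≤ 8 * G.maxDegree * Q := by linarith

theorem sq_mul_sum_norm_sq_le_of_sum_eq_zero {ι : Type*} {c : ℝ} (hc : 0 ≤ c)
    (hG : G.IsVertexExpander c) (f : V → lp (fun _ : ι => ℝ) 2) (hf : ∑ v, f v = 0) :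
    c ^ 2 * ∑ v, ‖f v‖ ^ 2 ≤
      8 * G.maxDegree * ∑ x, ∑ y ∈ G.neighborFinset x, ‖f x - f y‖ ^ 2 := by
  have hlhs : HasSum (fun i => c ^ 2 * ∑ v, f v i ^ 2) (c ^ 2 * ∑ v, ‖f v‖ ^ 2) :=
    (hasSum_sum fun v _ => lp.hasSum_sq (f v)).mul_left _
  have hrhs : HasSum
      (fun i => 8 * G.maxDegree * ∑ x, ∑ y ∈ G.neighborFinset x, (f x i - f y i) ^ 2)
      (8 * G.maxDegree * ∑ x, ∑ y ∈ G.neighborFinset x, ‖f x - f y‖ ^ 2) :=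
    (hasSum_sum fun x _ => hasSum_sum fun y _ => lp.hasSum_sq (f x - f y)).mul_left _
  refine hasSum_le (fun i => G.sq_mul_sum_sq_le_of_sum_eq_zero hc hG (fun v => f v i) ?_) hlhs hrhs
  have := congrArg (fun u : lp (fun _ : ι => ℝ) 2 => u i) hf
  rw [lp.coeFn_sum, Finset.sum_apply] at this
  simpa using this

end SimpleGraph

/-- Corollary 2 of the paper: for an expander `(X_n)` of degree `d` and conductance
`c > 0` there is a constant `c₀ ≥ 0` such that for every `n` and every map
`f : X_n → ℓ²` that is `1`-Lipschitz with respect to the graph metric and satisfies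
`∑_{x∈X_n} f x = 0`, one has `(1/|X_n|) ∑_{x∈X_n} ‖f x‖² ≤ c₀/2`. -/
theorem expander_mean_sq_norm_bounded (d : ℕ) (c : ℝ) (hc : 0 < c) (E : Expander d c) :
    ∃ c₀ : ℝ, 0 ≤ c₀ ∧ ∀ (n : ℕ) (f : E.V n → lp (fun _ : ℕ => ℝ) 2),
      (∀ x y : E.V n, ‖f x - f y‖ ≤ ((E.G n).dist x y : ℝ)) →
      (∑ x : E.V n, f x) = 0 →
      (Fintype.card (E.V n) : ℝ)⁻¹ * ∑ x : E.V n, ‖f x‖ ^ 2 ≤ c₀ / 2 := by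
  classical
  refine ⟨16 * d ^ 2 / c ^ 2, by positivity, fun n f hf hsum => ?_⟩
  set G := E.G n
  set N : ℝ := (Fintype.card (E.V n) : ℝ)
  have hN : 0 < N := by
    have := (E.connected n).nonempty
    exact Nat.cast_pos.2 Fintype.card_pos
  have hΔ : (G.maxDegree : ℝ) ≤ d := by
    exact_mod_cast G.maxDegree_le_of_forall_degree_le d fun v =>
      ((G.degree_eq_gdeg v).trans (E.regular n v)).le
  have henergy := G.sum_sum_neighborFinset_norm_sub_sq_le f fun x y hxy => by
    simpa [SimpleGraph.dist_eq_one_iff_adj.2 hxy] using hf x y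
  have hpoin := G.sq_mul_sum_norm_sq_le_of_sum_eq_zero hc.le (E.expansion n) f hsum
  rw [inv_mul_le_iff₀ hN, show N * (16 * d ^ 2 / c ^ 2 / 2) = 8 * d ^ 2 * N / c ^ 2 by ring,
    le_div_iff₀ (by positivity)]
  calc (∑ x, ‖f x‖ ^ 2) * c ^ 2 ≤ 8 * G.maxDegree * (G.maxDegree * N) := by
        linarith [mul_le_mul_of_nonneg_left henergy (by positivity : (0 : ℝ) ≤ 8 * G.maxDegree)]
    _ ≤ 8 * d * (d * N) := by gcongr
    _ = 8 * d ^ 2 * N := by ring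
end

section
/- Let Γ be a group acting by isometries on a metric space X and acting on a topological space P in such a way that for every compact set K ⊆ P the set {γ ∈ Γ : (γ·K) ∩ K ≠ ∅} is finite. Equip X × P with the diagonal Γ-action, and let f : X × P → ℝ^N be Γ-invariant, i.e., f(γ·x, γ·z) = f(x, z) for all γ, x, z. Fix r > 0 and suppose there is a compact set C ⊆ X × P such that {(x, z) : ‖f(x, z)‖ ≤ r} ⊆ ⋃_{γ∈Γ} γ·C. Then there is a constant c(r) such that for every z ∈ P, the set {x ∈ X : ‖f(x, z)‖ ≤ r} has diameter at most c(r). -/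
/-- The coarse content of Lemma 1: let `Γ` act by isometries on a metric space `X`
and properly on a topological space `P` (for every compact `K ⊆ P` only finitely
many `γ` move `K` back onto itself). If `f : X × P → ℝ^N` is invariant under the
diagonal action and the sublevel set `{‖f‖ ≤ r}` is contained in `Γ·C` for some
compact `C ⊆ X × P`, then the slices `{x : ‖f (x, z)‖ ≤ r}` have uniformly bounded
diameter. -/
theorem slice_diam_bounded
    {G : Type*} [Group G] {X : Type*} [MetricSpace X] [MulAction G X]
    (hiso : ∀ γ : G, Isometry fun x : X => γ • x)
    {P : Type*} [TopologicalSpace P] [MulAction G P]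
    (hproper : ∀ K : Set P, IsCompact K →
      {γ : G | ((fun z : P => γ • z) '' K ∩ K).Nonempty}.Finite)
    {N : ℕ} (f : X → P → EuclideanSpace ℝ (Fin N))
    (hinv : ∀ (γ : G) (x : X) (z : P), f (γ • x) (γ • z) = f x z)
    (r : ℝ) (hr : 0 < r)
    (C : Set (X × P)) (hC : IsCompact C)
    (hsub : {q : X × P | ‖f q.1 q.2‖ ≤ r} ⊆
      ⋃ γ : G, (fun q : X × P => (γ • q.1, γ • q.2)) '' C) :
    ∃ c : ℝ, ∀ (z : P) (x x' : X), ‖f x z‖ ≤ r → ‖f x' z‖ ≤ r → dist x x' ≤ c := by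
  set C₁ : Set X := Prod.fst '' C with hC₁def
  set K : Set P := Prod.snd '' C with hKdef
  have hC₁c : IsCompact C₁ := hC.image continuous_fst
  have hKc : IsCompact K := hC.image continuous_snd
  have hF : {γ : G | ((fun z : P => γ • z) '' K ∩ K).Nonempty}.Finite := hproper K hKc
  set F : Set G := {γ : G | ((fun z : P => γ • z) '' K ∩ K).Nonempty} with hFdef
  set S : Set X := ⋃ δ ∈ F, (fun a : X => δ • a) '' C₁ with hSdef
  have hSc : IsCompact S :=
    hF.isCompact_biUnion (fun δ _ => hC₁c.image (hiso δ).continuous)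
  have hb : Bornology.IsBounded (C₁ ∪ S) := (hC₁c.union hSc).isBounded
  refine ⟨Metric.diam (C₁ ∪ S), fun z x x' hx hx' => ?_⟩
  have h1 : (x, z) ∈ ⋃ γ : G, (fun q : X × P => (γ • q.1, γ • q.2)) '' C := hsub hx
  have h2 : (x', z) ∈ ⋃ γ : G, (fun q : X × P => (γ • q.1, γ • q.2)) '' C := hsub hx'
  rw [Set.mem_iUnion] at h1 h2
  obtain ⟨γ, q, hqC, hqe⟩ := h1
  obtain ⟨γ', q', hq'C, hq'e⟩ := h2
  obtain ⟨hx1, hz1⟩ : γ • q.1 = x ∧ γ • q.2 = z := Prod.mk.injEq .. ▸ hqe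
  obtain ⟨hx2, hz2⟩ : γ' • q'.1 = x' ∧ γ' • q'.2 = z := Prod.mk.injEq .. ▸ hq'e
  have hδF : γ⁻¹ * γ' ∈ F := by
    refine ⟨q.2, ⟨q'.2, ⟨q', hq'C, rfl⟩, ?_⟩, ⟨q, hqC, rfl⟩⟩
    show (γ⁻¹ * γ') • q'.2 = q.2
    rw [mul_smul, hz2, ← hz1, inv_smul_smul]
  have key : x' = γ • ((γ⁻¹ * γ') • q'.1) := by
    rw [smul_smul, mul_inv_cancel_left, hx2]
  have hdist : dist x x' = dist q.1 ((γ⁻¹ * γ') • q'.1) := by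
    rw [← hx1, key, (hiso γ).dist_eq]
  rw [hdist]
  refine Metric.dist_le_diam_of_mem hb (Or.inl ⟨q, hqC, rfl⟩) (Or.inr ?_)
  exact Set.mem_biUnion hδF ⟨q'.1, ⟨q', hq'C, rfl⟩, rfl⟩
end

section
/- Let Γ be a group with a finite symmetric generating set S, acting freely, properly discontinuously, and cocompactly by isometries on a proper geodesic metric space X, and acting continuously and properly on a locally compact Hausdorff space P (properness meaning: for every compact K ⊆ P the set {γ : (γ·K) ∩ K ≠ ∅} is finite). Let p : P → ℝ^N be a continuous proper map satisfying the Displacement Bound Condition ‖p(z) − p(γ·z)‖ ≤ ‖γ‖_S for all γ ∈ Γ and z ∈ P. Then there exists a continuous map α : X × P → ℝ^N such that: (1) α(γ·x, γ·z) = α(x, z) for all γ ∈ Γ, x ∈ X, z ∈ P (invariance under the diagonal action); (2) for every x ∈ X, the map z ↦ α(x, z) is proper; (3) for every z ∈ P, the map x ↦ α(x, z) is 1-Lipschitz. -/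
/-- The word norm of `g` with respect to a generating set `S`: the least `n` such
that `g` is a product of `n` elements of `S`. -/
noncomputable def wordNorm {G : Type*} [Group G] (S : Set G) (g : G) : ℕ :=
  sInf {n : ℕ | ∃ l : List G, (∀ s ∈ l, s ∈ S) ∧ l.prod = g ∧ l.length = n}

/-- A metric space is geodesic if any two points `x, x'` are joined by an isometric
image of the interval `[0, d(x, x')]`. -/
def IsGeodesicSpace (X : Type*) [MetricSpace X] : Prop :=
  ∀ x x' : X, ∃ γ : ℝ → X, γ 0 = x ∧ γ (dist x x') = x' ∧
    ∀ s ∈ Set.Icc (0 : ℝ) (dist x x'), ∀ t ∈ Set.Icc (0 : ℝ) (dist x x'),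
      dist (γ s) (γ t) = |s - t|

/-!
Fix a `K`-dense orbit `G • x₀`. The tents `max (K + 1 - dist x (γ • x₀)) 0`, normalised, form a
locally finite `G`-equivariant partition of unity `φ_γ` on `X`, and
`α x z = ∑ γ, φ_γ x • p (γ⁻¹ • z)` is invariant and continuous. By the displacement bound `α x`
stays a bounded distance from `p`, hence is proper. Since `∑ γ, (φ_γ x - φ_γ y) = 0`, the same
bound controls `α x z - α y z` by a multiple of `dist x y` for nearby `x, y` close to `x₀`;
equivariance spreads this estimate over `X`, geodesics make it global, and dividing `α` by the
resulting Lipschitz constant finishes the proof.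
-/

open Set Function Metric
open scoped NNReal

theorem IsGeodesicSpace.lipschitzWith_of_dist_le {Y E : Type*} [MetricSpace Y]
    [PseudoMetricSpace E] (hY : IsGeodesicSpace Y) {f : Y → E} {C : ℝ≥0} {δ : ℝ} (hδ : 0 < δ)
    (hf : ∀ x y, dist x y ≤ δ → dist (f x) (f y) ≤ C * dist x y) : LipschitzWith C f := by
  have key : ∀ n : ℕ, ∀ x y, dist x y ≤ n * δ → dist (f x) (f y) ≤ C * dist x y := by
    intro n
    induction n with
    | zero => exact fun x y h => hf x y (h.trans (by simp [hδ.le]))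
    | succ n ih =>
      intro x y hxy
      rcases le_total (dist x y) δ with h | h
      · exact hf x y h
      -- cut a geodesic from `x` to `y` at distance `δ` from `x`; the rest is shorter by `δ`
      obtain ⟨c, rfl, hcy, hc⟩ := hY x y
      set d := dist (c 0) y
      have h0 : (0 : ℝ) ∈ Icc 0 d := ⟨le_rfl, dist_nonneg⟩
      have hδd : δ ∈ Icc 0 d := ⟨hδ.le, h⟩
      have hd : d ∈ Icc 0 d := ⟨dist_nonneg, le_rfl⟩
      have h1 : dist (c 0) (c δ) = δ := by rw [hc 0 h0 δ hδd, zero_sub, abs_neg, abs_of_pos hδ]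
      have h2 : dist (c δ) y = d - δ := by
        rw [← hcy, hc δ hδd d hd, abs_sub_comm, abs_of_nonneg (by linarith)]
      calc dist (f (c 0)) (f y) ≤ dist (f (c 0)) (f (c δ)) + dist (f (c δ)) (f y) :=
            dist_triangle _ _ _
        _ ≤ C * δ + C * (d - δ) := by
          have hx := hf _ _ h1.le
          have hy := ih _ _ (h2.trans_le (by push_cast at hxy; linarith))
          rw [h1] at hx
          rw [h2] at hy
          exact add_le_add hx hy
        _ = C * d := by ring
  refine LipschitzWith.of_dist_le_mul fun x y => ?_
  obtain ⟨n, hn⟩ := exists_nat_ge (dist x y / δ)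
  exact key n x y (by rwa [div_le_iff₀ hδ] at hn)

theorem isCompact_preimage_of_dist_le {P E : Type*} [TopologicalSpace P] [MetricSpace E]
    [ProperSpace E] {f p : P → E} (hf : Continuous f)
    (hp : ∀ K : Set E, IsCompact K → IsCompact (p ⁻¹' K)) {C : ℝ} (hC : ∀ z, dist (f z) (p z) ≤ C)
    {K : Set E} (hK : IsCompact K) : IsCompact (f ⁻¹' K) :=
  (hp _ hK.cthickening).of_isClosed_subset (hK.isClosed.preimage hf) fun z hz =>
    mem_cthickening_of_dist_le _ _ _ _ hz (dist_comm (f z) (p z) ▸ hC z)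

theorem abs_div_sub_div_le {a a' b b' B : ℝ} (hb : 1 ≤ b) (hb' : 1 ≤ b') (ha' : |a'| ≤ B) :
    |a / b - a' / b'| ≤ |a - a'| + B * |b - b'| := by
  have hb0 : 0 < b := by linarith
  have hb0' : 0 < b' := by linarith
  have key : a / b - a' / b' = (a - a') / b + a' * (b' - b) / (b * b') := by
    field_simp
    ring
  rw [key]
  refine (abs_add_le _ _).trans (add_le_add ?_ ?_)
  · rw [abs_div, abs_of_pos hb0]
    exact div_le_self (abs_nonneg _) hb
  · rw [abs_div, abs_mul, abs_of_pos (mul_pos hb0 hb0'), abs_sub_comm b']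
    exact (div_le_self (by positivity) (one_le_mul_of_one_le_of_one_le hb hb')).trans
      (mul_le_mul_of_nonneg_right ha' (abs_nonneg _))

theorem LipschitzWith.inv_add_one_smul {α E : Type*} [PseudoEMetricSpace α]
    [SeminormedAddCommGroup E] [NormedSpace ℝ E] {C : ℝ≥0} {f : α → E} (hf : LipschitzWith C f) :
    LipschitzWith 1 fun x => ((C : ℝ) + 1)⁻¹ • f x := by
  refine ((lipschitzWith_smul _).comp hf).weaken ?_
  rw [← NNReal.coe_le_coe, NNReal.coe_mul, coe_nnnorm, norm_inv,
    Real.norm_of_nonneg (by positivity), inv_mul_le_iff₀ (by positivity)]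
  simp

section Tent

variable {X : Type*} [PseudoMetricSpace X]

noncomputable def tent (R : ℝ) (c x : X) : ℝ := max (R - dist x c) 0

theorem tent_nonneg (R : ℝ) (c x : X) : 0 ≤ tent R c x := le_max_right _ _

theorem tent_le {R : ℝ} (hR : 0 ≤ R) (c x : X) : tent R c x ≤ R :=
  max_le (by linarith [dist_nonneg (x := x) (y := c)]) hR

theorem sub_dist_le_tent (R : ℝ) (c x : X) : R - dist x c ≤ tent R c x := le_max_left _ _

theorem dist_lt_of_tent_ne_zero {R : ℝ} {c x : X} (h : tent R c x ≠ 0) : dist x c < R := by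
  by_contra! h'
  exact h (max_eq_right (by linarith))

theorem lipschitzWith_tent (R : ℝ) (c : X) : LipschitzWith 1 (tent R c) := by
  have := ((LipschitzWith.const R).sub (LipschitzWith.dist_left c)).max_const 0
  rw [zero_add] at this
  exact this

theorem abs_tent_sub_le (R : ℝ) (c x y : X) : |tent R c x - tent R c y| ≤ dist x y := by
  simpa [Real.dist_eq] using (lipschitzWith_tent R c).dist_le_mul x y

end Tent

section OrbitAverage

variable {G X : Type*} [Group G] [PseudoMetricSpace X] [MulAction G X]

theorem finite_setOf_dist_smul_le [ProperSpace X]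
    (hdisc : ∀ K : Set X, IsCompact K →
      {γ : G | ((fun x : X => γ • x) '' K ∩ K).Nonempty}.Finite)
    (x₀ x : X) (r : ℝ) : {γ : G | dist x (γ • x₀) ≤ r}.Finite :=
  (hdisc _ (isCompact_singleton.union (isCompact_closedBall x r))).subset fun γ hγ =>
    ⟨γ • x₀, mem_image_of_mem _ (Or.inl rfl), Or.inr (by rwa [mem_closedBall, dist_comm])⟩

theorem locallyFinite_support_tent {x₀ : X}
    (hfin : ∀ (x : X) (r : ℝ), {γ : G | dist x (γ • x₀) ≤ r}.Finite) (R : ℝ) :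
    LocallyFinite fun γ : G => support (tent R (γ • x₀)) := by
  intro x
  refine ⟨ball x 1, ball_mem_nhds x one_pos, (hfin x (R + 1)).subset ?_⟩
  rintro γ ⟨y, hy, hyx⟩
  rw [mem_ball] at hyx
  have := dist_lt_of_tent_ne_zero hy
  rw [mem_ofPred_eq]
  linarith [dist_triangle_left x (γ • x₀) y]

variable (G) in
noncomputable def orbitTentSum (R : ℝ) (x₀ x : X) : ℝ := ∑ᶠ γ : G, tent R (γ • x₀) x

noncomputable def orbitWeight (R : ℝ) (x₀ x : X) (γ : G) : ℝ :=
  tent R (γ • x₀) x / orbitTentSum G R x₀ x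

variable {R : ℝ} {x₀ x y : X}

theorem orbitTentSum_eq_sum {F : Finset G} (hF : ∀ γ : G, dist x (γ • x₀) < R → γ ∈ F) :
    orbitTentSum G R x₀ x = ∑ γ ∈ F, tent R (γ • x₀) x :=
  finsum_eq_sum_of_support_subset _ fun γ hγ => hF γ (dist_lt_of_tent_ne_zero hγ)

theorem one_le_orbitTentSum (hfin : ∀ r : ℝ, {γ : G | dist x (γ • x₀) ≤ r}.Finite)
    (hx : ∃ γ : G, dist x (γ • x₀) ≤ R - 1) : 1 ≤ orbitTentSum G R x₀ x := by
  obtain ⟨γ, hγ⟩ := hx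
  have hsupp : HasFiniteSupport fun η : G => tent R (η • x₀) x :=
    (hfin R).subset fun η hη => (dist_lt_of_tent_ne_zero hη).le
  calc (1 : ℝ) ≤ tent R (γ • x₀) x := by linarith [sub_dist_le_tent R (γ • x₀) x]
    _ ≤ orbitTentSum G R x₀ x := single_le_finsum γ hsupp fun η => tent_nonneg _ _ _

theorem continuous_orbitTentSum (hfin : ∀ (x : X) (r : ℝ), {γ : G | dist x (γ • x₀) ≤ r}.Finite)
    (R : ℝ) : Continuous (orbitTentSum G R x₀) :=
  continuous_finsum (fun _ => (lipschitzWith_tent R _).continuous)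
    (locallyFinite_support_tent hfin R)

theorem abs_orbitTentSum_sub_le {F : Finset G} (hx : ∀ γ : G, dist x (γ • x₀) < R → γ ∈ F)
    (hy : ∀ γ : G, dist y (γ • x₀) < R → γ ∈ F) :
    |orbitTentSum G R x₀ x - orbitTentSum G R x₀ y| ≤ F.card * dist x y := by
  rw [orbitTentSum_eq_sum hx, orbitTentSum_eq_sum hy, ← Finset.sum_sub_distrib]
  calc _ ≤ ∑ γ ∈ F, |tent R (γ • x₀) x - tent R (γ • x₀) y| := Finset.abs_sum_le_sum_abs _ _
    _ ≤ ∑ _γ ∈ F, dist x y := Finset.sum_le_sum fun γ _ => abs_tent_sub_le R _ x y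
    _ = F.card * dist x y := by rw [Finset.sum_const, nsmul_eq_mul]

theorem sum_orbitWeight {F : Finset G} (hF : ∀ γ : G, dist x (γ • x₀) < R → γ ∈ F)
    (hx : orbitTentSum G R x₀ x ≠ 0) : ∑ γ ∈ F, orbitWeight R x₀ x γ = 1 := by
  simp only [orbitWeight]
  rw [← Finset.sum_div, ← orbitTentSum_eq_sum hF, div_self hx]

theorem abs_orbitWeight_sub_le (hR : 0 ≤ R) {F : Finset G}
    (hx : ∀ γ : G, dist x (γ • x₀) < R → γ ∈ F) (hy : ∀ γ : G, dist y (γ • x₀) < R → γ ∈ F)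
    (h1x : 1 ≤ orbitTentSum G R x₀ x) (h1y : 1 ≤ orbitTentSum G R x₀ y) (γ : G) :
    |orbitWeight R x₀ x γ - orbitWeight R x₀ y γ| ≤ (1 + R * F.card) * dist x y := by
  have htent : |tent R (γ • x₀) y| ≤ R := by
    rw [abs_of_nonneg (tent_nonneg _ _ _)]
    exact tent_le hR _ _
  calc _ ≤ |tent R (γ • x₀) x - tent R (γ • x₀) y|
          + R * |orbitTentSum G R x₀ x - orbitTentSum G R x₀ y| :=
        abs_div_sub_div_le h1x h1y htent
    _ ≤ dist x y + R * (F.card * dist x y) :=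
        add_le_add (abs_tent_sub_le R _ x y)
          (mul_le_mul_of_nonneg_left (abs_orbitTentSum_sub_le hx hy) hR)
    _ = (1 + R * F.card) * dist x y := by ring

theorem tent_ne_zero_of_orbitWeight_ne_zero {γ : G} (h : orbitWeight R x₀ x γ ≠ 0) :
    tent R (γ • x₀) x ≠ 0 :=
  (div_ne_zero_iff.1 h).1

theorem tent_mul_smul [IsIsometricSMul G X] (R : ℝ) (γ η : G) (x₀ x : X) :
    tent R ((γ * η) • x₀) (γ • x) = tent R (η • x₀) x := by
  rw [tent, tent, mul_smul, dist_smul]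

theorem orbitTentSum_smul [IsIsometricSMul G X] (γ : G) (x : X) :
    orbitTentSum G R x₀ (γ • x) = orbitTentSum G R x₀ x := by
  rw [orbitTentSum, ← finsum_comp_equiv (Equiv.mulLeft γ)]
  exact finsum_congr fun η => tent_mul_smul R γ η x₀ x

variable {P E : Type*} [MulAction G P] [NormedAddCommGroup E] [NormedSpace ℝ E]

variable (G) in
noncomputable def orbitAverage (R : ℝ) (x₀ : X) (p : P → E) (x : X) (z : P) : E :=
  ∑ᶠ γ : G, orbitWeight R x₀ x γ • p (γ⁻¹ • z)

theorem orbitAverage_smul_smul [IsIsometricSMul G X] (p : P → E) (γ : G) (x : X) (z : P) :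
    orbitAverage G R x₀ p (γ • x) (γ • z) = orbitAverage G R x₀ p x z := by
  rw [orbitAverage, ← finsum_comp_equiv (Equiv.mulLeft γ)]
  refine finsum_congr fun η => ?_
  rw [Equiv.coe_mulLeft, orbitWeight, orbitWeight, tent_mul_smul, orbitTentSum_smul, mul_inv_rev,
    mul_smul, inv_smul_smul]

theorem continuous_orbitAverage [TopologicalSpace P] [ContinuousConstSMul G P]
    (hfin : ∀ (x : X) (r : ℝ), {γ : G | dist x (γ • x₀) ≤ r}.Finite)
    (hR : ∀ x : X, ∃ γ : G, dist x (γ • x₀) ≤ R - 1) {p : P → E} (hp : Continuous p) :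
    Continuous fun q : X × P => orbitAverage G R x₀ p q.1 q.2 := by
  have hweight (γ : G) : Continuous fun x => orbitWeight R x₀ x γ :=
    (lipschitzWith_tent R _).continuous.div (continuous_orbitTentSum hfin R) fun x =>
      (zero_lt_one.trans_le (one_le_orbitTentSum (hfin x) (hR x))).ne'
  refine continuous_finsum (fun γ => ?_)
    (((locallyFinite_support_tent hfin R).preimage_continuous continuous_fst).subset
      fun γ q hq => tent_ne_zero_of_orbitWeight_ne_zero (left_ne_zero_of_smul hq))
  exact ((hweight γ).comp continuous_fst).smul
    (hp.comp ((continuous_const_smul γ⁻¹).comp continuous_snd))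

theorem orbitAverage_sub_eq_sum {F : Finset G} (hF : ∀ γ : G, dist x (γ • x₀) < R → γ ∈ F)
    (hx : orbitTentSum G R x₀ x ≠ 0) (p : P → E) (z : P) :
    orbitAverage G R x₀ p x z - p z = ∑ γ ∈ F, orbitWeight R x₀ x γ • (p (γ⁻¹ • z) - p z) := by
  rw [orbitAverage, finsum_eq_sum_of_support_subset _ fun γ hγ =>
    hF γ (dist_lt_of_tent_ne_zero (tent_ne_zero_of_orbitWeight_ne_zero (left_ne_zero_of_smul hγ)))]
  simp only [smul_sub, Finset.sum_sub_distrib, ← Finset.sum_smul, sum_orbitWeight hF hx, one_smul]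

theorem exists_dist_orbitAverage_le (hfin : ∀ r : ℝ, {γ : G | dist x (γ • x₀) ≤ r}.Finite)
    (hx : ∃ γ : G, dist x (γ • x₀) ≤ R - 1) {p : P → E} {D : G → ℝ}
    (hD : ∀ (γ : G) (z : P), dist (p (γ • z)) (p z) ≤ D γ) :
    ∃ C : ℝ, ∀ z : P, dist (orbitAverage G R x₀ p x z) (p z) ≤ C := by
  obtain ⟨W, hW⟩ := ((hfin R).image fun γ => D γ⁻¹).bddAbove
  set F := (hfin R).toFinset
  have hF : ∀ γ : G, dist x (γ • x₀) < R → γ ∈ F := fun γ hγ => (hfin R).mem_toFinset.2 hγ.le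
  have h1 := one_le_orbitTentSum hfin hx
  refine ⟨W, fun z => ?_⟩
  rw [dist_eq_norm, orbitAverage_sub_eq_sum hF (zero_lt_one.trans_le h1).ne' p z]
  calc _ ≤ ∑ γ ∈ F, ‖orbitWeight R x₀ x γ • (p (γ⁻¹ • z) - p z)‖ := norm_sum_le _ _
    _ ≤ ∑ γ ∈ F, orbitWeight R x₀ x γ * W := Finset.sum_le_sum fun γ hγ => by
        have hw : 0 ≤ orbitWeight R x₀ x γ := div_nonneg (tent_nonneg _ _ _) (zero_le_one.trans h1)
        rw [norm_smul, Real.norm_of_nonneg hw, ← dist_eq_norm]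
        exact mul_le_mul_of_nonneg_left
          ((hD _ _).trans (hW (mem_image_of_mem _ ((hfin R).mem_toFinset.1 hγ)))) hw
    _ = W := by rw [← Finset.sum_mul, sum_orbitWeight hF (zero_lt_one.trans_le h1).ne', one_mul]

theorem isCompact_preimage_orbitAverage [TopologicalSpace P] [ContinuousConstSMul G P]
    [ProperSpace E] (hfin : ∀ (x : X) (r : ℝ), {γ : G | dist x (γ • x₀) ≤ r}.Finite)
    (hR : ∀ x : X, ∃ γ : G, dist x (γ • x₀) ≤ R - 1) {p : P → E} (hp : Continuous p)
    (hpproper : ∀ K : Set E, IsCompact K → IsCompact (p ⁻¹' K)) {D : G → ℝ}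
    (hD : ∀ (γ : G) (z : P), dist (p (γ • z)) (p z) ≤ D γ) (x : X) {K : Set E}
    (hK : IsCompact K) : IsCompact ((fun z => orbitAverage G R x₀ p x z) ⁻¹' K) :=
  have ⟨_, hC⟩ := exists_dist_orbitAverage_le (hfin x) (hR x) hD
  isCompact_preimage_of_dist_le
    ((continuous_orbitAverage hfin hR hp).comp (Continuous.prodMk_right x)) hpproper hC hK

theorem dist_orbitAverage_le {W : ℝ} (hR : 0 ≤ R) {F : Finset G}
    (hx : ∀ γ : G, dist x (γ • x₀) < R → γ ∈ F) (hy : ∀ γ : G, dist y (γ • x₀) < R → γ ∈ F)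
    (h1x : 1 ≤ orbitTentSum G R x₀ x) (h1y : 1 ≤ orbitTentSum G R x₀ y) {p : P → E} {z : P}
    (hW : ∀ γ ∈ F, dist (p (γ⁻¹ • z)) (p z) ≤ W) :
    dist (orbitAverage G R x₀ p x z) (orbitAverage G R x₀ p y z)
      ≤ F.card * ((1 + R * F.card) * W) * dist x y := by
  -- the weights at `x` and at `y` both sum to `1`, so `p z` may be subtracted inside the sum
  have hdiff : orbitAverage G R x₀ p x z - orbitAverage G R x₀ p y z
      = ∑ γ ∈ F, (orbitWeight R x₀ x γ - orbitWeight R x₀ y γ) • (p (γ⁻¹ • z) - p z) := by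
    rw [← sub_sub_sub_cancel_right _ _ (p z),
      orbitAverage_sub_eq_sum hx (zero_lt_one.trans_le h1x).ne',
      orbitAverage_sub_eq_sum hy (zero_lt_one.trans_le h1y).ne', ← Finset.sum_sub_distrib]
    simp only [sub_smul]
  rw [dist_eq_norm, hdiff]
  calc _ ≤ ∑ γ ∈ F, ‖(orbitWeight R x₀ x γ - orbitWeight R x₀ y γ) • (p (γ⁻¹ • z) - p z)‖ :=
        norm_sum_le _ _
    _ ≤ ∑ _γ ∈ F, (1 + R * F.card) * dist x y * W := Finset.sum_le_sum fun γ hγ => by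
        have hw := abs_orbitWeight_sub_le hR hx hy h1x h1y γ
        rw [norm_smul, Real.norm_eq_abs, ← dist_eq_norm]
        exact mul_le_mul hw (hW γ hγ) dist_nonneg ((abs_nonneg _).trans hw)
    _ = F.card * ((1 + R * F.card) * W) * dist x y := by
        rw [Finset.sum_const, nsmul_eq_mul]
        ring

theorem exists_dist_orbitAverage_le_of_dist_le
    (hfin : ∀ (x : X) (r : ℝ), {γ : G | dist x (γ • x₀) ≤ r}.Finite)
    (hR : ∀ x : X, ∃ γ : G, dist x (γ • x₀) ≤ R - 1) {p : P → E} {D : G → ℝ}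
    (hD : ∀ (γ : G) (z : P), dist (p (γ • z)) (p z) ≤ D γ) (x₁ : X) (ρ : ℝ) :
    ∃ C : ℝ, ∀ (z : P) (x y : X), dist x x₁ ≤ ρ → dist x y ≤ 1 →
      dist (orbitAverage G R x₀ p x z) (orbitAverage G R x₀ p y z) ≤ C * dist x y := by
  have hT := hfin x₁ (ρ + 1 + R)
  obtain ⟨W, hW⟩ := (hT.image fun γ => D γ⁻¹).bddAbove
  set F := hT.toFinset
  refine ⟨F.card * ((1 + R * F.card) * W), fun z x y hx hxy => ?_⟩
  have hR0 : 0 ≤ R := by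
    obtain ⟨γ, hγ⟩ := hR x
    linarith [dist_nonneg (x := x) (y := γ • x₀)]
  have hF : ∀ y, dist x y ≤ 1 → ∀ γ : G, dist y (γ • x₀) < R → γ ∈ F := fun y hy γ hγ => by
    rw [hT.mem_toFinset, mem_ofPred_eq]
    linarith [dist_triangle4 x₁ x y (γ • x₀), dist_comm x x₁]
  exact dist_orbitAverage_le hR0 (hF x (by simp)) (hF y hxy)
    (one_le_orbitTentSum (hfin x) (hR x)) (one_le_orbitTentSum (hfin y) (hR y))
    fun γ hγ => (hD _ _).trans (hW (mem_image_of_mem _ (hT.mem_toFinset.1 hγ)))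

end OrbitAverage

theorem dist_le_of_smul_smul_eq {G X P E : Type*} [Group G] [PseudoMetricSpace X]
    [MulAction G X] [IsIsometricSMul G X] [MulAction G P] [PseudoMetricSpace E] {f : X → P → E}
    (hf : ∀ (γ : G) (x : X) (z : P), f (γ • x) (γ • z) = f x z) {x₀ : X} {K δ C : ℝ}
    (hK : ∀ x : X, ∃ γ : G, dist x (γ • x₀) ≤ K)
    (hloc : ∀ (z : P) (x y : X), dist x x₀ ≤ K → dist x y ≤ δ → dist (f x z) (f y z) ≤ C * dist x y)
    (z : P) (x y : X) (hxy : dist x y ≤ δ) : dist (f x z) (f y z) ≤ C * dist x y := by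
  obtain ⟨γ, hγ⟩ := hK x
  have hx : dist (γ⁻¹ • x) x₀ ≤ K := by rwa [← dist_smul γ, smul_inv_smul]
  have := hloc (γ⁻¹ • z) (γ⁻¹ • x) (γ⁻¹ • y) hx (by rwa [dist_smul])
  rwa [hf, hf, dist_smul] at this

theorem exists_lipschitzWith_orbitAverage {G X P E : Type*} [Group G] [MetricSpace X]
    [MulAction G X] [IsIsometricSMul G X] [MulAction G P] [NormedAddCommGroup E]
    [NormedSpace ℝ E] (hX : IsGeodesicSpace X) {R : ℝ} {x₀ : X}
    (hfin : ∀ (x : X) (r : ℝ), {γ : G | dist x (γ • x₀) ≤ r}.Finite)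
    (hR : ∀ x : X, ∃ γ : G, dist x (γ • x₀) ≤ R - 1) {p : P → E} {D : G → ℝ}
    (hD : ∀ (γ : G) (z : P), dist (p (γ • z)) (p z) ≤ D γ) :
    ∃ C : ℝ≥0, ∀ z : P, LipschitzWith C fun x => orbitAverage G R x₀ p x z := by
  obtain ⟨C, hC⟩ := exists_dist_orbitAverage_le_of_dist_le hfin hR hD x₀ (R - 1)
  refine ⟨C.toNNReal, fun z => hX.lipschitzWith_of_dist_le one_pos fun x y hxy => ?_⟩
  calc _ ≤ C * dist x y := dist_le_of_smul_smul_eq (orbitAverage_smul_smul p) hR hC z x y hxy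
    _ ≤ C.toNNReal * dist x y := mul_le_mul_of_nonneg_right (Real.le_coe_toNNReal C) dist_nonneg

theorem exists_lipschitz_representation_general
    {G : Type*} [Group G] (S : Set G)
    {X : Type*} [MetricSpace X] [ProperSpace X] (hgeo : IsGeodesicSpace X)
    [MulAction G X]
    (hisoX : ∀ γ : G, Isometry fun x : X => γ • x)
    (hdisc : ∀ K : Set X, IsCompact K →
      {γ : G | ((fun x : X => γ • x) '' K ∩ K).Nonempty}.Finite)
    (hcocompact : ∃ (K : ℝ) (x₀ : X), ∀ x : X, ∃ γ : G, dist x (γ • x₀) ≤ K)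
    {P : Type*} [TopologicalSpace P]
    [MulAction G P]
    (hcontP : ∀ γ : G, Continuous fun z : P => γ • z)
    {N : ℕ} (p : P → EuclideanSpace ℝ (Fin N))
    (hpcont : Continuous p)
    (hpproper : ∀ K : Set (EuclideanSpace ℝ (Fin N)), IsCompact K →
      IsCompact (p ⁻¹' K))
    (hdbc : ∀ (γ : G) (z : P), ‖p z - p (γ • z)‖ ≤ (wordNorm S γ : ℝ)) :
    ∃ α : X → P → EuclideanSpace ℝ (Fin N),
      Continuous (fun q : X × P => α q.1 q.2) ∧
      (∀ (γ : G) (x : X) (z : P), α (γ • x) (γ • z) = α x z) ∧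
      (∀ (x : X) (K : Set (EuclideanSpace ℝ (Fin N))), IsCompact K →
        IsCompact ((fun z : P => α x z) ⁻¹' K)) ∧
      (∀ z : P, LipschitzWith 1 fun x : X => α x z) := by
  have : IsIsometricSMul G X := ⟨hisoX⟩
  have : ContinuousConstSMul G P := ⟨hcontP⟩
  obtain ⟨K, x₀, hK⟩ := hcocompact
  have hR : ∀ x : X, ∃ γ : G, dist x (γ • x₀) ≤ K + 1 - 1 := by simpa using hK
  have hfin := finite_setOf_dist_smul_le hdisc x₀
  have hD (γ : G) (z : P) : dist (p (γ • z)) (p z) ≤ wordNorm S γ := by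
    rw [dist_comm, dist_eq_norm]
    exact hdbc γ z
  obtain ⟨C, hC⟩ := exists_lipschitzWith_orbitAverage hgeo hfin hR hD
  have hc : (C : ℝ) + 1 ≠ 0 := by positivity
  refine ⟨fun x z => ((C : ℝ) + 1)⁻¹ • orbitAverage G (K + 1) x₀ p x z, ?_, fun γ x z => ?_,
    fun x L hL => ?_, fun z => (hC z).inv_add_one_smul⟩
  · exact (continuous_orbitAverage hfin hR hpcont).const_smul ((C : ℝ) + 1)⁻¹
  · simp only [orbitAverage_smul_smul]
  · have := isCompact_preimage_orbitAverage hfin hR hpcont hpproper hD x (hL.smul ((C : ℝ) + 1))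
    rwa [← preimage_smul_inv₀ hc, ← preimage_comp] at this

/-- Proposition 3 of the paper: let `Γ` (with finite symmetric generating set `S`)
act freely, properly discontinuously and cocompactly by isometries on a proper
geodesic metric space `X`, and act continuously and properly on a locally compact
Hausdorff space `P`. If `p : P → ℝ^N` is a continuous proper map satisfying the
Displacement Bound Condition `‖p z − p (γ • z)‖ ≤ ‖γ‖_S`, then there is a
continuous map `α : X × P → ℝ^N` that is (1) invariant under the diagonal action,
(2) proper on every slice `{x} × P`, and (3) `1`-Lipschitz on every slice `X × {z}`. -/
theorem exists_lipschitz_representation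
    {G : Type*} [Group G] (S : Set G)
    (hSfin : S.Finite) (hSsymm : S⁻¹ = S) (hSgen : Subgroup.closure S = ⊤)
    {X : Type*} [MetricSpace X] [ProperSpace X] (hgeo : IsGeodesicSpace X)
    [MulAction G X]
    (hisoX : ∀ γ : G, Isometry fun x : X => γ • x)
    (hfree : ∀ (γ : G) (x : X), γ • x = x → γ = 1)
    (hdisc : ∀ K : Set X, IsCompact K →
      {γ : G | ((fun x : X => γ • x) '' K ∩ K).Nonempty}.Finite)
    (hcocompact : ∃ (K : ℝ) (x₀ : X), ∀ x : X, ∃ γ : G, dist x (γ • x₀) ≤ K)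
    {P : Type*} [TopologicalSpace P] [LocallyCompactSpace P] [T2Space P]
    [MulAction G P]
    (hcontP : ∀ γ : G, Continuous fun z : P => γ • z)
    (hproperP : ∀ K : Set P, IsCompact K →
      {γ : G | ((fun z : P => γ • z) '' K ∩ K).Nonempty}.Finite)
    {N : ℕ} (p : P → EuclideanSpace ℝ (Fin N))
    (hpcont : Continuous p)
    (hpproper : ∀ K : Set (EuclideanSpace ℝ (Fin N)), IsCompact K →
      IsCompact (p ⁻¹' K))
    (hdbc : ∀ (γ : G) (z : P), ‖p z - p (γ • z)‖ ≤ (wordNorm S γ : ℝ)) :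
    ∃ α : X → P → EuclideanSpace ℝ (Fin N),
      Continuous (fun q : X × P => α q.1 q.2) ∧
      (∀ (γ : G) (x : X) (z : P), α (γ • x) (γ • z) = α x z) ∧
      (∀ (x : X) (K : Set (EuclideanSpace ℝ (Fin N))), IsCompact K →
        IsCompact ((fun z : P => α x z) ⁻¹' K)) ∧
      (∀ z : P, LipschitzWith 1 fun x : X => α x z) :=
  exists_lipschitz_representation_general S hgeo hisoX hdisc hcocompact hcontP p hpcont hpproper
    hdbc
end
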